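/- Let (f_n)_{n∈ℕ} be a real-valued martingale with f_0 = 0. Then the following pathwise inequality holds almost surely for every N ∈ ℕ: S_N f ≤ √3·f*_N − Σ_{n=0}^{N−1} (f_n·df_{n+1})/(√3·f*_n), where terms with f*_n = 0 are interpreted as 0. -/

import Mathlib

open MeasureTheory Filter Set Finset

/-- Running maximum `f*_n(ω) = max_{k ≤ n} |f_k(ω)|` of a real-valued process. -/
noncomputable def mstar {Ω : Type*} (f : ℕ → Ω → ℝ) (n : ℕ) (ω : Ω) : ℝ :=
  (Finset.range (n + 1)).sup' (Finset.nonempty_range_iff.mpr (Nat.succ_ne_zero n))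
    (fun k => |f k ω|)

lemma davis_step (c m r s2 g d : ℝ) (hc2 : c^2 = 3) (hc : 0 < c)
    (hs2 : 0 ≤ s2) (hg : |g| ≤ m) (hr : 0 ≤ r)
    (hI : s2 - g^2 + 4*m^2 ≤ 2*c*m*r) :
    s2 + d^2 - (g+d)^2 + 4*(max m |g+d|)^2 ≤
      2*c*(max m |g+d|)*(r + c*(max m |g+d| - m) - g*d/(c*m)) ∧
    0 ≤ r + c*(max m |g+d| - m) - g*d/(c*m) := by
  have hm0 : 0 ≤ m := le_trans (abs_nonneg g) hg
  rcases eq_or_lt_of_le hm0 with hm | hm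
  · -- m = 0 : then g = 0, s2 = 0
    subst hm
    have hgz : g = 0 := by simpa using hg
    subst hgz
    have hs2z : s2 = 0 := le_antisymm (by nlinarith) hs2
    subst hs2z
    simp only [zero_add, mul_zero, zero_mul, zero_div, sub_zero]
    rw [max_eq_right (abs_nonneg d)]
    constructor
    · nlinarith [sq_abs d, abs_nonneg d, mul_nonneg (mul_nonneg hc.le (abs_nonneg d)) hr]
    · nlinarith [abs_nonneg d]
  · -- m > 0
    have hcm : (0:ℝ) < c * m := mul_pos hc hm
    rcases le_or_gt |g+d| m with h1 | h1
    · -- max = m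
      rw [max_eq_left h1]
      have he : g*d/(c*m)*(c*m) = g*d := div_mul_cancel₀ _ (ne_of_gt hcm)
      have hgd2 : (g+d)^2 ≤ m^2 := by nlinarith [abs_nonneg (g+d), sq_abs (g+d)]
      have main : s2 + d^2 - (g+d)^2 + 4*m^2 ≤ 2*c*m*(r + c*(m - m) - g*d/(c*m)) := by
        nlinarith [he]
      refine ⟨main, ?_⟩
      by_contra hcon
      push_neg at hcon
      have hneg : 2*c*m*(r + c*(m - m) - g*d/(c*m)) < 0 :=
        mul_neg_of_pos_of_neg (by positivity) hcon
      nlinarith [main, hgd2]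
    · -- max = |g+d| =: a > m
      set a := |g+d| with hadef
      rw [max_eq_right h1.le]
      have ha2 : a^2 = (g+d)^2 := sq_abs _
      have ha0 : 0 < a := lt_trans hm h1
      have haub : a ≤ m + |d| := le_trans (abs_add_le g d) (add_le_add_left hg _)
      have h4 : (a-m)^2 ≤ d^2 := by nlinarith [sq_abs d, abs_nonneg d, haub, h1]
      have key2 : 0 ≤ (a - m) * (s2 + d^2 + 2*a*m - a^2) := by
        apply mul_nonneg (by linarith)
        nlinarith [h4, hs2, sq_nonneg m]
      have hIa : (s2 - g^2 + 4*m^2)*a ≤ (2*c*m*r)*a :=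
        mul_le_mul_of_nonneg_right hI ha0.le
      have he2 : 2*c*a*(r + c*(a - m) - g*d/(c*m)) =
          2*c*a*r + 6*a^2 - 6*a*m - 2*a*(g*d)/m := by
        field_simp
        linear_combination (2*m*(a-m)) * hc2
      have ha2m : (a - m)*(a^2 - (g+d)^2) = 0 := by rw [ha2]; ring
      have hfin : (s2 + d^2 - (g+d)^2 + 4*a^2)*m ≤ (2*c*a*r + 6*a^2 - 6*a*m)*m - 2*a*(g*d) := by
        nlinarith [hIa, key2, ha2m]
      have hdm : (2*a*(g*d)/m)*m = 2*a*(g*d) := div_mul_cancel₀ _ (ne_of_gt hm)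
      have main : s2 + d^2 - (g+d)^2 + 4*a^2 ≤ 2*c*a*(r + c*(a - m) - g*d/(c*m)) := by
        rw [he2]
        have h6 : s2 + d^2 - (g+d)^2 + 4*a^2 ≤ ((2*c*a*r + 6*a^2 - 6*a*m)*m - 2*a*(g*d))/m :=
          (le_div_iff₀ hm).mpr hfin
        have h7 : ((2*c*a*r + 6*a^2 - 6*a*m)*m - 2*a*(g*d))/m
            = 2*c*a*r + 6*a^2 - 6*a*m - 2*a*(g*d)/m := by
          field_simp
        linarith [h6, h7.le, h7.ge]
      refine ⟨main, ?_⟩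
      by_contra hcon
      push_neg at hcon
      have hneg : 2*c*a*(r + c*(a - m) - g*d/(c*m)) < 0 :=
        mul_neg_of_pos_of_neg (by positivity) hcon
      linarith [main, hneg, hs2, sq_nonneg d, pow_pos ha0 2, ha2]


lemma mstar_succ {Ω : Type*} (f : ℕ → Ω → ℝ) (n : ℕ) (ω : Ω) :
    mstar f (n+1) ω = max (mstar f n ω) |f (n+1) ω| := by
  unfold mstar
  apply le_antisymm
  · apply Finset.sup'_le
    intro k hk
    rw [Finset.mem_range] at hk
    rcases Nat.lt_succ_iff_lt_or_eq.mp hk with h | h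
    · exact le_max_of_le_left (Finset.le_sup' (fun k => |f k ω|) (Finset.mem_range.mpr h))
    · subst h; exact le_max_right _ _
  · apply max_le
    · apply Finset.sup'_le
      intro k hk
      rw [Finset.mem_range] at hk
      exact Finset.le_sup' (fun k => |f k ω|) (Finset.mem_range.mpr (by omega))
    · exact Finset.le_sup' (fun k => |f k ω|) (Finset.mem_range.mpr (by omega))

lemma abs_le_mstar {Ω : Type*} (f : ℕ → Ω → ℝ) (n : ℕ) (ω : Ω) :
    |f n ω| ≤ mstar f n ω :=
  Finset.le_sup' (fun k => |f k ω|) (Finset.self_mem_range_succ n)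

lemma mstar_nonneg {Ω : Type*} (f : ℕ → Ω → ℝ) (n : ℕ) (ω : Ω) :
    0 ≤ mstar f n ω :=
  le_trans (abs_nonneg _) (abs_le_mstar f n ω)

lemma davis_aux {Ω : Type*} (f : ℕ → Ω → ℝ) (ω : Ω) (h0 : f 0 ω = 0) (N : ℕ) :
    0 ≤ Real.sqrt 3 * mstar f N ω -
        ∑ n ∈ Finset.range N, f n ω * (f (n+1) ω - f n ω) / (Real.sqrt 3 * mstar f n ω) ∧
    (∑ n ∈ Finset.Icc 1 N, |f n ω - f (n-1) ω| ^ 2) - (f N ω)^2 + 4*(mstar f N ω)^2 ≤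
      2 * Real.sqrt 3 * mstar f N ω *
        (Real.sqrt 3 * mstar f N ω -
          ∑ n ∈ Finset.range N, f n ω * (f (n+1) ω - f n ω) / (Real.sqrt 3 * mstar f n ω)) := by
  have hc2 : Real.sqrt 3 ^ 2 = 3 := Real.sq_sqrt (by norm_num)
  have hc : 0 < Real.sqrt 3 := Real.sqrt_pos.mpr (by norm_num)
  induction N with
  | zero =>
    simp [mstar, h0]
  | succ N ih =>
    obtain ⟨ihr, ihI⟩ := ih
    set c := Real.sqrt 3 with hcdef
    set m := mstar f N ω with hmdef
    set S := ∑ n ∈ Finset.range N, f n ω * (f (n+1) ω - f n ω) / (c * mstar f n ω) with hSdef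
    set s2 := ∑ n ∈ Finset.Icc 1 N, |f n ω - f (n-1) ω| ^ 2 with hs2def
    have hs2 : 0 ≤ s2 := Finset.sum_nonneg fun i _ => by positivity
    have hstep := davis_step c m (c * m - S) s2 (f N ω) (f (N+1) ω - f N ω)
      hc2 hc hs2 (abs_le_mstar f N ω) ihr (by linarith [ihI])
    rw [show f N ω + (f (N+1) ω - f N ω) = f (N+1) ω by ring] at hstep
    obtain ⟨h1, h2⟩ := hstep
    have hM' : mstar f (N+1) ω = max m |f (N+1) ω| := mstar_succ f N ω
    have hsum : ∑ n ∈ Finset.Icc 1 (N+1), |f n ω - f (n-1) ω| ^ 2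
        = s2 + (f (N+1) ω - f N ω)^2 := by
      rw [Finset.sum_Icc_succ_top (Nat.succ_le_succ (Nat.zero_le N))]
      congr 1
      simp only [Nat.add_sub_cancel, sq_abs]
    have hrng : ∑ n ∈ Finset.range (N+1), f n ω * (f (n+1) ω - f n ω) / (c * mstar f n ω)
        = S + f N ω * (f (N+1) ω - f N ω) / (c * m) := by
      rw [Finset.sum_range_succ]
    constructor
    · rw [hM', hrng]
      have : c * max m |f (N+1) ω| - (S + f N ω * (f (N+1) ω - f N ω) / (c * m))
          = (c * m - S) + c * (max m |f (N+1) ω| - m)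
            - f N ω * (f (N+1) ω - f N ω) / (c * m) := by ring
      rw [this]
      exact h2
    · rw [hM', hrng, hsum]
      have eB : 2 * c * max m |f (N+1) ω| *
            (c * max m |f (N+1) ω| - (S + f N ω * (f (N+1) ω - f N ω) / (c * m)))
          = 2 * c * max m |f (N+1) ω| *
            ((c * m - S) + c * (max m |f (N+1) ω| - m)
              - f N ω * (f (N+1) ω - f N ω) / (c * m)) := by ring
      rw [eB]
      linarith [h1]


/-- The pathwise Davis inequality for real-valued martingales starting at 0:
`S_N f ≤ √3 f*_N - Σ_{n=0}^{N-1} f_n df_{n+1}/(√3 f*_n)` almost surely. -/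
theorem pathwise_davis_real
    {Ω : Type*} {mΩ : MeasurableSpace Ω} {μ : Measure Ω} [IsProbabilityMeasure μ]
    {ℱ : Filtration ℕ mΩ}
    (f : ℕ → Ω → ℝ) (hf : Martingale f ℱ μ) (hf0 : f 0 = 0) (N : ℕ) :
    ∀ᵐ ω ∂μ,
      Real.sqrt (∑ n ∈ Finset.Icc 1 N, |f n ω - f (n-1) ω| ^ 2)
        ≤ Real.sqrt 3 * mstar f N ω
            - ∑ n ∈ Finset.range N,
                f n ω * (f (n+1) ω - f n ω) / (Real.sqrt 3 * mstar f n ω) := by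
  refine Filter.Eventually.of_forall fun ω => ?_
  have h0 : f 0 ω = 0 := by rw [hf0]; rfl
  obtain ⟨hr, hI⟩ := davis_aux f ω h0 N
  have hc2 : Real.sqrt 3 ^ 2 = 3 := Real.sq_sqrt (by norm_num)
  have hc : 0 < Real.sqrt 3 := Real.sqrt_pos.mpr (by norm_num)
  set c := Real.sqrt 3 with hcdef
  set m := mstar f N ω with hmdef
  set X := ∑ n ∈ Finset.Icc 1 N, |f n ω - f (n-1) ω| ^ 2 with hXdef
  set R := c * m - ∑ n ∈ Finset.range N, f n ω * (f (n+1) ω - f n ω) / (c * mstar f n ω)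
    with hRdef
  have hX : 0 ≤ X := Finset.sum_nonneg fun i _ => by positivity
  have hm0 : 0 ≤ m := mstar_nonneg f N ω
  have hf2 : (f N ω)^2 ≤ m^2 := by
    nlinarith [abs_le_mstar f N ω, abs_nonneg (f N ω), sq_abs (f N ω)]
  have hIR : X - (f N ω)^2 + 4*m^2 ≤ 2*c*m*R := by linarith [hI]
  have hs : Real.sqrt X ^ 2 = X := Real.sq_sqrt hX
  rcases eq_or_lt_of_le hm0 with hm | hm
  · rw [← hm] at hIR hf2
    have hX0 : X = 0 := le_antisymm (by nlinarith [hf2, hIR]) hX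
    rw [hX0, Real.sqrt_zero]
    exact hr
  · nlinarith [hs, Real.sqrt_nonneg X, sq_nonneg (Real.sqrt X - c*m), hf2, hIR, hr,
      mul_pos hc hm]
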